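/- arXiv:2405.00837 — 7 statements merged into one kernel-verified Lean document; each statement's English description precedes it below -/
import Mathlib

section
/- Let x_1,...,x_n ∈ ℝ^d, let c ∈ ℝ^d and R > 0, and let I ⊆ {1,...,n} be a set of indices such that ‖x_j − c‖ = R for j ∈ I and ‖x_j − c‖ > R for j ∉ I. Let y ∈ ℝ^d. Suppose w* ∈ Δ^n is supported on I with Σ_i w*_i x_i = y, and w ∈ Δ^n satisfies Σ_i w_i x_i = y and w_j > 0 for some j ∉ I. Then Σ_i w*_i ‖x_i − y‖² < Σ_i w_i ‖x_i − y‖². -/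
/-!
By the parallel-axis identity, for weights `w` summing to one with barycentre `y`,
`∑ wᵢ ‖xᵢ - y‖² = ∑ wᵢ ‖xᵢ - c‖² - ‖y - c‖²`. Both representations share `y`, so it
suffices to compare `∑ wᵢ ‖xᵢ - c‖²`: it equals `R²` for `w*`, which lives on the
sphere, and exceeds `R²` for `w`, which puts mass on a point strictly outside it.
-/

open scoped BigOperators

open Finset

section WeightedSums

variable {ι : Type*} [Fintype ι]

theorem sum_mul_norm_sub_sq_eq_sub {E : Type*} [NormedAddCommGroup E]
    [InnerProductSpace ℝ E]
    (x : ι → E) (c y : E) {w : ι → ℝ} (hw1 : ∑ i, w i = 1) (hwy : ∑ i, w i • x i = y) :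
    ∑ i, w i * ‖x i - y‖ ^ 2 = ∑ i, w i * ‖x i - c‖ ^ 2 - ‖y - c‖ ^ 2 := by
  have hcentred : ∑ i, w i • (x i - c) = y - c := by
    simp only [smul_sub, sum_sub_distrib, hwy, ← sum_smul, hw1, one_smul]
  have hinner : ∑ i, w i * inner ℝ (x i - c) (y - c) = ‖y - c‖ ^ 2 := by
    simp_rw [← real_inner_smul_left, ← sum_inner, hcentred, real_inner_self_eq_norm_sq]
  have hexpand : ∀ i, ‖x i - y‖ ^ 2
      = ‖x i - c‖ ^ 2 - 2 * inner ℝ (x i - c) (y - c) + ‖y - c‖ ^ 2 := fun i => by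
    rw [← norm_sub_sq_real, sub_sub_sub_cancel_right]
  calc ∑ i, w i * ‖x i - y‖ ^ 2
      = ∑ i, w i * ‖x i - c‖ ^ 2 - 2 * ∑ i, w i * inner ℝ (x i - c) (y - c)
          + (∑ i, w i) * ‖y - c‖ ^ 2 := by
        simp only [hexpand, mul_sum, sum_mul, ← sum_sub_distrib, ← sum_add_distrib]
        exact sum_congr rfl fun i _ => by ring
    _ = ∑ i, w i * ‖x i - c‖ ^ 2 - ‖y - c‖ ^ 2 := by
        rw [hinner, hw1]; ring

theorem sum_mul_eq_of_eq_on_support {w f : ι → ℝ} {I : Finset ι} {a : ℝ}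
    (hw1 : ∑ i, w i = 1) (hsupp : ∀ i ∉ I, w i = 0) (hf : ∀ i ∈ I, f i = a) :
    ∑ i, w i * f i = a := by
  calc ∑ i, w i * f i = ∑ i, w i * a := sum_congr rfl fun i _ => by
        by_cases hi : i ∈ I
        · rw [hf i hi]
        · rw [hsupp i hi, zero_mul, zero_mul]
    _ = a := by rw [← sum_mul, hw1, one_mul]

theorem lt_sum_mul_of_le_of_lt {w f : ι → ℝ} {a : ℝ} (hw : ∀ i, 0 ≤ w i)
    (hw1 : ∑ i, w i = 1) (hf : ∀ i, a ≤ f i) {j : ι} (hwj : 0 < w j) (hfj : a < f j) :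
    a < ∑ i, w i * f i := by
  calc a = ∑ i, w i * a := by rw [← sum_mul, hw1, one_mul]
    _ < ∑ i, w i * f i := sum_lt_sum (fun i _ => mul_le_mul_of_nonneg_left (hf i) (hw i))
        ⟨j, mem_univ j, mul_lt_mul_of_pos_left hfj hwj⟩

end WeightedSums

theorem stmt2_general {d n : ℕ} (x : Fin n → EuclideanSpace ℝ (Fin d))
    (c : EuclideanSpace ℝ (Fin d)) (R : ℝ) (hR : 0 < R)
    (I : Finset (Fin n))
    (hI : ∀ j ∈ I, ‖x j - c‖ = R) (hI' : ∀ j ∉ I, R < ‖x j - c‖)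
    (y : EuclideanSpace ℝ (Fin d))
    (wstar : Fin n → ℝ) (hws1 : ∑ i, wstar i = 1)
    (hsupp : ∀ i ∉ I, wstar i = 0)
    (hwsy : ∑ i, wstar i • x i = y)
    (w : Fin n → ℝ) (hw : ∀ i, 0 ≤ w i) (hw1 : ∑ i, w i = 1)
    (hwy : ∑ i, w i • x i = y)
    (j : Fin n) (hj : j ∉ I) (hjpos : 0 < w j) :
    ∑ i, wstar i * ‖x i - y‖ ^ 2 < ∑ i, w i * ‖x i - y‖ ^ 2 := by
  rw [sum_mul_norm_sub_sq_eq_sub x c y hws1 hwsy, sum_mul_norm_sub_sq_eq_sub x c y hw1 hwy,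
    sub_lt_sub_iff_right]
  have hstar : ∑ i, wstar i * ‖x i - c‖ ^ 2 = R ^ 2 :=
    sum_mul_eq_of_eq_on_support hws1 hsupp fun i hi => by rw [hI i hi]
  have hsq_le : ∀ i, R ^ 2 ≤ ‖x i - c‖ ^ 2 := fun i => by
    by_cases hi : i ∈ I
    · rw [hI i hi]
    · exact pow_le_pow_left₀ hR.le (hI' i hi).le 2
  rw [hstar]
  exact lt_sum_mul_of_le_of_lt hw hw1 hsq_le hjpos
    (pow_lt_pow_left₀ (hI' j hj) hR.le two_ne_zero)

theorem stmt2 {d n : ℕ} (x : Fin n → EuclideanSpace ℝ (Fin d))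
    (c : EuclideanSpace ℝ (Fin d)) (R : ℝ) (hR : 0 < R)
    (I : Finset (Fin n))
    (hI : ∀ j ∈ I, ‖x j - c‖ = R) (hI' : ∀ j ∉ I, R < ‖x j - c‖)
    (y : EuclideanSpace ℝ (Fin d))
    (wstar : Fin n → ℝ) (hws : ∀ i, 0 ≤ wstar i) (hws1 : ∑ i, wstar i = 1)
    (hsupp : ∀ i ∉ I, wstar i = 0)
    (hwsy : ∑ i, wstar i • x i = y)
    (w : Fin n → ℝ) (hw : ∀ i, 0 ≤ w i) (hw1 : ∑ i, w i = 1)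
    (hwy : ∑ i, w i • x i = y)
    (j : Fin n) (hj : j ∉ I) (hjpos : 0 < w j) :
    ∑ i, wstar i * ‖x i - y‖ ^ 2 < ∑ i, w i * ‖x i - y‖ ^ 2 :=
  stmt2_general x c R hR I hI hI' y wstar hws1 hsupp hwsy w hw hw1 hwy j hj hjpos
end

section
/- Fix ρ > 0, points x_1,...,x_n ∈ ℝ^d (n ≥ 1), and y ∈ ℝ^d such that there exists w_e ∈ Δ^n with Σ_i (w_e)_i x_i = y. Let w_ρ be any minimizer over Δ^n of F(w) = (1/2)‖Σ_i w_i x_i − y‖² + ρ Σ_i w_i ‖x_i − y‖². Then ‖Σ_i (w_ρ)_i x_i − y‖² ≤ ρ C, where C := max_i ‖x_i − y‖² − min_i ‖x_i − y‖². -/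
/-!
Move the minimizer `w` towards the exact representation `w'` of `y`: along
`(1 - t) • w + t • w'` the residual `∑ i, w i • x i - y` is only scaled by `1 - t`, while the
penalty is affine in `t`. Minimality at `t = 0` then gives the first-order condition
`‖∑ i, w i • x i - y‖² ≤ ρ (∑ w' i ‖x i - y‖² - ∑ w i ‖x i - y‖²)`, and the two weighted averages
lie between the minimum and the maximum of `‖x i - y‖²`.
-/

open Finset Filter Topology

section

variable {ι E : Type*} [Fintype ι]

lemma sum_mul_le_sup'_of_mem_stdSimplex {w : ι → ℝ} (hw : w ∈ stdSimplex ℝ ι)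
    (hne : (univ : Finset ι).Nonempty) (f : ι → ℝ) : ∑ i, w i * f i ≤ univ.sup' hne f := by
  have := centerMass_le_sup (s := univ) (f := f) (fun i _ => hw.1 i) (by rw [hw.2]; exact one_pos)
  rwa [centerMass_eq_of_sum_1 _ _ hw.2] at this

lemma inf'_le_sum_mul_of_mem_stdSimplex {w : ι → ℝ} (hw : w ∈ stdSimplex ℝ ι)
    (hne : (univ : Finset ι).Nonempty) (f : ι → ℝ) : univ.inf' hne f ≤ ∑ i, w i * f i := by
  have := inf_le_centerMass (s := univ) (f := f) (fun i _ => hw.1 i) (by rw [hw.2]; exact one_pos)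
  rwa [centerMass_eq_of_sum_1 _ _ hw.2] at this

variable [SeminormedAddCommGroup E] [NormedSpace ℝ E]

noncomputable def penalizedObjective (ρ : ℝ) (x : ι → E) (y : E) (w : ι → ℝ) : ℝ :=
  (1 / 2) * ‖(∑ i, w i • x i) - y‖ ^ 2 + ρ * ∑ i, w i * ‖x i - y‖ ^ 2

lemma sum_smul_sub_eq_one_sub_smul {x : ι → E} {y : E} {w w' : ι → ℝ}
    (hw'y : ∑ i, w' i • x i = y) (t : ℝ) :
    (∑ i, ((1 - t) • w + t • w') i • x i) - y = (1 - t) • ((∑ i, w i • x i) - y) := by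
  simp only [Pi.add_apply, Pi.smul_apply, smul_eq_mul, add_smul, mul_smul, sum_add_distrib,
    ← smul_sum, hw'y]
  module

lemma penalizedObjective_segment (ρ : ℝ) {x : ι → E} {y : E} {w w' : ι → ℝ}
    (hw'y : ∑ i, w' i • x i = y) (t : ℝ) :
    penalizedObjective ρ x y ((1 - t) • w + t • w') =
      (1 - t) ^ 2 * ((1 / 2) * ‖(∑ i, w i • x i) - y‖ ^ 2) +
        ρ * ((1 - t) * ∑ i, w i * ‖x i - y‖ ^ 2 + t * ∑ i, w' i * ‖x i - y‖ ^ 2) := by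
  rw [penalizedObjective, sum_smul_sub_eq_one_sub_smul hw'y, norm_smul, mul_pow,
    Real.norm_eq_abs, sq_abs]
  simp only [Pi.add_apply, Pi.smul_apply, smul_eq_mul, add_mul, sum_add_distrib, mul_sum,
    mul_assoc]
  ring

theorem norm_sum_smul_sub_sq_le_of_isMinOn {ρ : ℝ} {x : ι → E} {y : E} {w w' : ι → ℝ}
    (hw : w ∈ stdSimplex ℝ ι) (hw' : w' ∈ stdSimplex ℝ ι) (hw'y : ∑ i, w' i • x i = y)
    (hmin : IsMinOn (penalizedObjective ρ x y) (stdSimplex ℝ ι) w) :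
    ‖(∑ i, w i • x i) - y‖ ^ 2 ≤
      ρ * (∑ i, w' i * ‖x i - y‖ ^ 2 - ∑ i, w i * ‖x i - y‖ ^ 2) := by
  set A := ‖(∑ i, w i • x i) - y‖ ^ 2
  have hlim : Tendsto (fun t : ℝ => A * (1 - t / 2)) (𝓝[>] 0) (𝓝 A) :=
    tendsto_nhdsWithin_of_tendsto_nhds <|
      (by fun_prop : Continuous fun t : ℝ => A * (1 - t / 2)).tendsto' 0 A (by simp)
  refine le_of_tendsto hlim ?_
  filter_upwards [Ioo_mem_nhdsGT (zero_lt_one' ℝ)] with t ⟨ht0, ht1⟩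
  have hseg : penalizedObjective ρ x y w ≤ penalizedObjective ρ x y ((1 - t) • w + t • w') :=
    hmin (convex_stdSimplex ℝ ι hw hw' (a := 1 - t) (by linarith) ht0.le (by ring))
  rw [penalizedObjective_segment ρ hw'y, penalizedObjective] at hseg
  -- after cancelling, `hseg` is the goal multiplied by `t`
  exact le_of_mul_le_mul_left (by linear_combination hseg) ht0

end

theorem stmt3 {d n : ℕ} (ρ : ℝ) (hρ : 0 < ρ)
    (x : Fin n → EuclideanSpace ℝ (Fin d)) (y : EuclideanSpace ℝ (Fin d))
    (hne : (Finset.univ : Finset (Fin n)).Nonempty)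
    (we : Fin n → ℝ) (hwe : ∀ i, 0 ≤ we i) (hwe1 : ∑ i, we i = 1)
    (hwey : ∑ i, we i • x i = y)
    (wρ : Fin n → ℝ) (hwρ : ∀ i, 0 ≤ wρ i) (hwρ1 : ∑ i, wρ i = 1)
    (hmin : ∀ v : Fin n → ℝ, (∀ i, 0 ≤ v i) → ∑ i, v i = 1 →
      (1 / 2) * ‖(∑ i, wρ i • x i) - y‖ ^ 2 + ρ * ∑ i, wρ i * ‖x i - y‖ ^ 2 ≤
      (1 / 2) * ‖(∑ i, v i • x i) - y‖ ^ 2 + ρ * ∑ i, v i * ‖x i - y‖ ^ 2) :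
    ‖(∑ i, wρ i • x i) - y‖ ^ 2 ≤
      ρ * (Finset.univ.sup' hne (fun i => ‖x i - y‖ ^ 2)
            - Finset.univ.inf' hne (fun i => ‖x i - y‖ ^ 2)) := by
  have hwρ' : wρ ∈ stdSimplex ℝ (Fin n) := ⟨hwρ, hwρ1⟩
  have hwe' : we ∈ stdSimplex ℝ (Fin n) := ⟨hwe, hwe1⟩
  calc ‖(∑ i, wρ i • x i) - y‖ ^ 2
      ≤ ρ * (∑ i, we i * ‖x i - y‖ ^ 2 - ∑ i, wρ i * ‖x i - y‖ ^ 2) :=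
        norm_sum_smul_sub_sq_le_of_isMinOn hwρ' hwe' hwey fun v hv => hmin v hv.1 hv.2
    _ ≤ _ := by
        gcongr ρ * (?_ - ?_)
        · exact sum_mul_le_sup'_of_mem_stdSimplex hwe' hne _
        · exact inf'_le_sum_mul_of_mem_stdSimplex hwρ' hne _
end

section
/- Let x_1,...,x_n ∈ ℝ^d, y ∈ ℝ^d, ρ > 0. Let w_proj ∈ Δ^n be such that p := Σ_i (w_proj)_i x_i is the Euclidean projection of y onto the convex hull of {x_1,...,x_n}, and let w_ρ ∈ Δ^n minimize (1/2)‖Σ_i w_i x_i − y‖² + ρ Σ_i w_i‖x_i − y‖² over Δ^n. Then ‖Σ_i (w_ρ)_i x_i − p‖² ≤ ρ C, where C := max_i ‖x_i − y‖² − min_i ‖x_i − y‖². -/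
/-!
Write `q = ∑ (w_ρ)_i x_i`, `A = ∑ (w_proj)_i ‖x_i - y‖²` and `B = ∑ (w_ρ)_i ‖x_i - y‖²`.
Along the segment from `w_ρ` towards `w_proj` inside the simplex the regularized objective is a
quadratic polynomial in the step `t`, minimal at `t = 0`; so its slope there is nonnegative:
`⟪q - y, q - p⟫ ≤ ρ (A - B)`. The variational inequality of the projection gives
`‖q - p‖² ≤ ⟪q - y, q - p⟫`, and `A - B ≤ max_i ‖x_i - y‖² - min_i ‖x_i - y‖²`.
-/

open Finset Filter Topology
open scoped InnerProductSpace

theorem nonneg_of_forall_mem_Ioc_nonneg_mul_add_mul_sq {a b : ℝ}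
    (h : ∀ t ∈ Set.Ioc (0 : ℝ) 1, 0 ≤ a * t + b * t ^ 2) : 0 ≤ a := by
  have hlim : Tendsto (fun t => a + b * t) (𝓝[>] 0) (𝓝 a) := by
    simpa using ((by fun_prop : Continuous fun t : ℝ => a + b * t).tendsto 0).mono_left
      nhdsWithin_le_nhds
  refine ge_of_tendsto hlim ?_
  filter_upwards [Ioc_mem_nhdsGT (zero_lt_one' ℝ)] with t ht
  have hquad := h t ht
  have ht0 : 0 < t := ht.1
  nlinarith

theorem sum_mul_sub_sum_mul_le_sup'_sub_inf' {ι : Type*} [Fintype ι]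
    (hne : (univ : Finset ι).Nonempty) (c : ι → ℝ) {u w : ι → ℝ} (hu : u ∈ stdSimplex ℝ ι)
    (hw : w ∈ stdSimplex ℝ ι) :
    ∑ i, u i * c i - ∑ i, w i * c i ≤ univ.sup' hne c - univ.inf' hne c := by
  have hsup := centerMass_le_sup (s := univ) (f := c) (fun i _ => hu.1 i)
    (by rw [hu.2]; exact one_pos)
  have hinf := inf_le_centerMass (s := univ) (f := c) (fun i _ => hw.1 i)
    (by rw [hw.2]; exact one_pos)
  simp only [centerMass, hu.2, hw.2, inv_one, smul_eq_mul] at hsup hinf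
  linarith

section

variable {E : Type*} [NormedAddCommGroup E] [InnerProductSpace ℝ E]

theorem norm_sub_sq_le_inner_of_inner_le_zero {p q y : E} (h : ⟪y - p, q - p⟫_ℝ ≤ 0) :
    ‖q - p‖ ^ 2 ≤ ⟪q - y, q - p⟫_ℝ := by
  have : ‖q - p‖ ^ 2 = ⟪q - y, q - p⟫_ℝ + ⟪y - p, q - p⟫_ℝ := by
    rw [← real_inner_self_eq_norm_sq, ← inner_add_left, sub_add_sub_cancel]
  linarith

theorem inner_sub_le_zero_of_forall_norm_sub_le {K : Set E} (hK : Convex ℝ K) {p y : E}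
    (hp : p ∈ K) (hmin : ∀ v ∈ K, ‖p - y‖ ≤ ‖v - y‖) : ∀ v ∈ K, ⟪y - p, v - p⟫_ℝ ≤ 0 := by
  have : Nonempty K := ⟨⟨p, hp⟩⟩
  refine (norm_eq_iInf_iff_real_inner_le_zero hK hp).mp (le_antisymm (le_ciInf fun v => ?_)
    (ciInf_le ⟨0, Set.forall_mem_range.2 fun _ => norm_nonneg _⟩ (⟨p, hp⟩ : K)))
  simpa only [norm_sub_rev y] using hmin v v.2

variable {ι : Type*} [Fintype ι]

noncomputable def regularizedObjective (x : ι → E) (c : ι → ℝ) (y : E) (ρ : ℝ) (w : ι → ℝ) : ℝ :=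
  1 / 2 * ‖∑ i, w i • x i - y‖ ^ 2 + ρ * ∑ i, w i * c i

theorem regularizedObjective_segment (x : ι → E) (c : ι → ℝ) (y : E) (ρ : ℝ) (w u : ι → ℝ)
    (t : ℝ) :
    regularizedObjective x c y ρ ((1 - t) • w + t • u) =
      regularizedObjective x c y ρ w +
        (⟪∑ i, w i • x i - y, ∑ i, u i • x i - ∑ i, w i • x i⟫_ℝ
          + ρ * (∑ i, u i * c i - ∑ i, w i * c i)) * t +
        ‖∑ i, u i • x i - ∑ i, w i • x i‖ ^ 2 / 2 * t ^ 2 := by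
  have hvec : ∑ i, ((1 - t) • w + t • u) i • x i - y =
      (∑ i, w i • x i - y) + t • (∑ i, u i • x i - ∑ i, w i • x i) := by
    simp only [Pi.add_apply, Pi.smul_apply, smul_eq_mul, add_smul, mul_smul, sum_add_distrib,
      ← smul_sum]
    module
  have hcost : ∑ i, ((1 - t) • w + t • u) i * c i =
      ∑ i, w i * c i + t * (∑ i, u i * c i - ∑ i, w i * c i) := by
    simp only [Pi.add_apply, Pi.smul_apply, smul_eq_mul, add_mul, sum_add_distrib, mul_assoc,
      ← mul_sum]
    ring
  rw [regularizedObjective, regularizedObjective, hvec, hcost, norm_add_sq_real, norm_smul,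
    real_inner_smul_right, Real.norm_eq_abs, mul_pow, sq_abs]
  ring

theorem inner_add_nonneg_of_isMinOn_regularizedObjective {x : ι → E} {c : ι → ℝ} {y : E} {ρ : ℝ}
    {w u : ι → ℝ} (hmin : IsMinOn (regularizedObjective x c y ρ) (stdSimplex ℝ ι) w)
    (hw : w ∈ stdSimplex ℝ ι) (hu : u ∈ stdSimplex ℝ ι) :
    0 ≤ ⟪∑ i, w i • x i - y, ∑ i, u i • x i - ∑ i, w i • x i⟫_ℝ
      + ρ * (∑ i, u i * c i - ∑ i, w i * c i) := by
  refine nonneg_of_forall_mem_Ioc_nonneg_mul_add_mul_sq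
    (b := ‖∑ i, u i • x i - ∑ i, w i • x i‖ ^ 2 / 2) fun t ht => ?_
  have hseg := isMinOn_iff.1 hmin _ <|
    convex_stdSimplex ℝ ι hw hu (sub_nonneg.2 ht.2) ht.1.le (sub_add_cancel 1 t)
  rw [regularizedObjective_segment] at hseg
  linarith

end

theorem stmt5 {d n : ℕ} (x : Fin n → EuclideanSpace ℝ (Fin d))
    (y : EuclideanSpace ℝ (Fin d)) (ρ : ℝ) (hρ : 0 < ρ)
    (hne : (Finset.univ : Finset (Fin n)).Nonempty)
    (wproj : Fin n → ℝ) (hwp : ∀ i, 0 ≤ wproj i) (hwp1 : ∑ i, wproj i = 1)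
    (p : EuclideanSpace ℝ (Fin d)) (hp : p = ∑ i, wproj i • x i)
    (hproj : ∀ v ∈ convexHull ℝ (Set.range x), ‖p - y‖ ≤ ‖v - y‖)
    (wρ : Fin n → ℝ) (hwρ : ∀ i, 0 ≤ wρ i) (hwρ1 : ∑ i, wρ i = 1)
    (hmin : ∀ v : Fin n → ℝ, (∀ i, 0 ≤ v i) → ∑ i, v i = 1 →
      (1 / 2) * ‖(∑ i, wρ i • x i) - y‖ ^ 2 + ρ * ∑ i, wρ i * ‖x i - y‖ ^ 2 ≤
      (1 / 2) * ‖(∑ i, v i • x i) - y‖ ^ 2 + ρ * ∑ i, v i * ‖x i - y‖ ^ 2) :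
    ‖(∑ i, wρ i • x i) - p‖ ^ 2 ≤
      ρ * (Finset.univ.sup' hne (fun i => ‖x i - y‖ ^ 2)
            - Finset.univ.inf' hne (fun i => ‖x i - y‖ ^ 2)) := by
  set q := ∑ i, wρ i • x i
  have hwp_mem : wproj ∈ stdSimplex ℝ (Fin n) := ⟨hwp, hwp1⟩
  have hwρ_mem : wρ ∈ stdSimplex ℝ (Fin n) := ⟨hwρ, hwρ1⟩
  have hmem_hull : ∀ w ∈ stdSimplex ℝ (Fin n), ∑ i, w i • x i ∈ convexHull ℝ (Set.range x) :=
    fun w hw => (convex_convexHull ℝ _).sum_mem (fun i _ => hw.1 i) hw.2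
      fun i _ => subset_convexHull ℝ _ ⟨i, rfl⟩
  have hproj_inner : ⟪y - p, q - p⟫_ℝ ≤ 0 :=
    inner_sub_le_zero_of_forall_norm_sub_le (convex_convexHull ℝ _)
      (hp ▸ hmem_hull _ hwp_mem) hproj q (hmem_hull _ hwρ_mem)
  have hfirst_order := inner_add_nonneg_of_isMinOn_regularizedObjective
    (c := fun i => ‖x i - y‖ ^ 2) (fun v hv => hmin v hv.1 hv.2) hwρ_mem hwp_mem
  rw [← hp, ← neg_sub q p, inner_neg_right] at hfirst_order
  calc ‖q - p‖ ^ 2 ≤ ⟪q - y, q - p⟫_ℝ := norm_sub_sq_le_inner_of_inner_le_zero hproj_inner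
    _ ≤ ρ * (∑ i, wproj i * ‖x i - y‖ ^ 2 - ∑ i, wρ i * ‖x i - y‖ ^ 2) := by linarith
    _ ≤ _ := mul_le_mul_of_nonneg_left
      (sum_mul_sub_sum_mul_le_sup'_sub_inf' hne _ hwp_mem hwρ_mem) hρ.le
end

section
/- Let x_1,...,x_n ∈ ℝ^d, let c ∈ ℝ^d, R > 0, and I ⊆ {1,...,n} with ‖x_j − c‖ = R for j ∈ I and ‖x_j − c‖ > R for j ∉ I. Let y ∈ ℝ^d, let w* ∈ Δ^n be supported on I with Σ_i w*_i x_i = y, and let w ∈ Δ^n satisfy Σ_i w_i x_i = y with w_α > 0 for some α ∉ I. Then Σ_i w*_i ‖x_i − y‖² = R² − ‖c − y‖² < Σ_i w_i ‖x_i − y‖². -/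
/-!
Expanding `‖x i - c‖² = ‖(x i - y) + (y - c)‖²` and averaging with weights of barycentre `y`
kills the cross term, so `∑ v i ‖x i - c‖² = ∑ v i ‖x i - y‖² + ‖c - y‖²` for every
representation `v` of `y`. On the circumscribing sphere the left side is `R²` for `w*`, while
mass on a point strictly outside the sphere makes it exceed `R²` for `w`.
-/

open scoped BigOperators
open Finset

variable {ι : Type*} [Fintype ι]

theorem sum_mul_norm_sub_sq_eq_add_norm_sq {E : Type*} [NormedAddCommGroup E]
    [InnerProductSpace ℝ E] (x : ι → E) (c y : E) (v : ι → ℝ)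
    (hv1 : ∑ i, v i = 1) (hvy : ∑ i, v i • x i = y) :
    ∑ i, v i * ‖x i - c‖ ^ 2 = ∑ i, v i * ‖x i - y‖ ^ 2 + ‖c - y‖ ^ 2 := by
  have hcentered : ∑ i, v i • (x i - y) = 0 := by
    simp only [smul_sub, sum_sub_distrib, hvy, ← sum_smul, hv1, one_smul, sub_self]
  calc ∑ i, v i * ‖x i - c‖ ^ 2
      = ∑ i, (v i * ‖x i - y‖ ^ 2 + 2 * inner ℝ (v i • (x i - y)) (y - c)
          + v i * ‖y - c‖ ^ 2) := by
        refine sum_congr rfl fun i _ => ?_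
        rw [show x i - c = (x i - y) + (y - c) by abel, norm_add_sq_real, real_inner_smul_left]
        ring
    _ = ∑ i, v i * ‖x i - y‖ ^ 2 + 2 * inner ℝ (∑ i, v i • (x i - y)) (y - c)
          + (∑ i, v i) * ‖y - c‖ ^ 2 := by
        rw [sum_add_distrib, sum_add_distrib, ← mul_sum, ← sum_inner, ← sum_mul]
    _ = ∑ i, v i * ‖x i - y‖ ^ 2 + ‖c - y‖ ^ 2 := by
        rw [hcentered, inner_zero_left, hv1, norm_sub_rev]
        ring

theorem sum_mul_sq_eq_of_support_subset (r : ι → ℝ) (R : ℝ) (v : ι → ℝ)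
    (hv1 : ∑ i, v i = 1) (hsupp : ∀ i, v i ≠ 0 → r i = R) :
    ∑ i, v i * r i ^ 2 = R ^ 2 := by
  calc ∑ i, v i * r i ^ 2 = ∑ i, v i * R ^ 2 := by
        refine sum_congr rfl fun i _ => ?_
        rcases eq_or_ne (v i) 0 with hvi | hvi
        · rw [hvi, zero_mul, zero_mul]
        · rw [hsupp i hvi]
    _ = R ^ 2 := by rw [← sum_mul, hv1, one_mul]

theorem sq_lt_sum_mul_sq (r : ι → ℝ) {R : ℝ} (hR : 0 ≤ R) (v : ι → ℝ)
    (hv : ∀ i, 0 ≤ v i) (hv1 : ∑ i, v i = 1) (hle : ∀ i, R ≤ r i)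
    (α : ι) (hα : R < r α) (hvα : 0 < v α) :
    R ^ 2 < ∑ i, v i * r i ^ 2 := by
  calc R ^ 2 = ∑ i, v i * R ^ 2 := by rw [← sum_mul, hv1, one_mul]
    _ < ∑ i, v i * r i ^ 2 := by
        refine sum_lt_sum (fun i _ => ?_) ⟨α, mem_univ α, ?_⟩
        · exact mul_le_mul_of_nonneg_left (pow_le_pow_left₀ hR (hle i) 2) (hv i)
        · exact mul_lt_mul_of_pos_left (pow_lt_pow_left₀ hα hR two_ne_zero) hvα

theorem stmt8_general {d n : ℕ} (x : Fin n → EuclideanSpace ℝ (Fin d))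
    (c : EuclideanSpace ℝ (Fin d)) (R : ℝ) (hR : 0 < R)
    (I : Finset (Fin n))
    (hI : ∀ j ∈ I, ‖x j - c‖ = R) (hI' : ∀ j ∉ I, R < ‖x j - c‖)
    (y : EuclideanSpace ℝ (Fin d))
    (wstar : Fin n → ℝ) (hws1 : ∑ i, wstar i = 1)
    (hsupp : ∀ i ∉ I, wstar i = 0)
    (hwsy : ∑ i, wstar i • x i = y)
    (w : Fin n → ℝ) (hw : ∀ i, 0 ≤ w i) (hw1 : ∑ i, w i = 1)
    (hwy : ∑ i, w i • x i = y)
    (α : Fin n) (hα : α ∉ I) (hαpos : 0 < w α) :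
    ∑ i, wstar i * ‖x i - y‖ ^ 2 = R ^ 2 - ‖c - y‖ ^ 2 ∧
    R ^ 2 - ‖c - y‖ ^ 2 < ∑ i, w i * ‖x i - y‖ ^ 2 := by
  have hsphere : ∀ i, wstar i ≠ 0 → ‖x i - c‖ = R := fun i hi =>
    hI i (by_contra fun hiI => hi (hsupp i hiI))
  have hout : ∀ i, R ≤ ‖x i - c‖ := fun i => by
    by_cases hi : i ∈ I
    · exact (hI i hi).ge
    · exact (hI' i hi).le
  have hstar := sum_mul_norm_sub_sq_eq_add_norm_sq x c y wstar hws1 hwsy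
  have hw' := sum_mul_norm_sub_sq_eq_add_norm_sq x c y w hw1 hwy
  rw [sum_mul_sq_eq_of_support_subset (fun i => ‖x i - c‖) R wstar hws1 hsphere] at hstar
  have hlt := sq_lt_sum_mul_sq (fun i => ‖x i - c‖) hR.le w hw hw1 hout α (hI' α hα) hαpos
  constructor <;> linarith

theorem stmt8 {d n : ℕ} (x : Fin n → EuclideanSpace ℝ (Fin d))
    (c : EuclideanSpace ℝ (Fin d)) (R : ℝ) (hR : 0 < R)
    (I : Finset (Fin n))
    (hI : ∀ j ∈ I, ‖x j - c‖ = R) (hI' : ∀ j ∉ I, R < ‖x j - c‖)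
    (y : EuclideanSpace ℝ (Fin d))
    (wstar : Fin n → ℝ) (hws : ∀ i, 0 ≤ wstar i) (hws1 : ∑ i, wstar i = 1)
    (hsupp : ∀ i ∉ I, wstar i = 0)
    (hwsy : ∑ i, wstar i • x i = y)
    (w : Fin n → ℝ) (hw : ∀ i, 0 ≤ w i) (hw1 : ∑ i, w i = 1)
    (hwy : ∑ i, w i • x i = y)
    (α : Fin n) (hα : α ∉ I) (hαpos : 0 < w α) :
    ∑ i, wstar i * ‖x i - y‖ ^ 2 = R ^ 2 - ‖c - y‖ ^ 2 ∧
    R ^ 2 - ‖c - y‖ ^ 2 < ∑ i, w i * ‖x i - y‖ ^ 2 :=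
  stmt8_general x c R hR I hI hI' y wstar hws1 hsupp hwsy w hw hw1 hwy α hα hαpos
end

section
/- Let x_1,...,x_n ∈ ℝ^d and suppose there exist c ∈ ℝ^d and R > 0 and an index set I ⊆ {1,...,n} with |I| ≤ d+1 such that ‖x_j − c‖ = R for j ∈ I and ‖x_j − c‖ > R for j ∉ I, and suppose y is in the convex hull of {x_j : j ∈ I}. Then any minimizer w* of Σ_i w_i‖x_i − y‖² over {w ∈ Δ^n : Σ_i w_i x_i = y} is supported on I; in particular w* has at most d+1 nonzero entries. -/
/-!
Expanding around the circumcentre `c`, the objective of any feasible `w` equals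
`∑ i, w i * ‖x i - c‖ ^ 2 - ‖y - c‖ ^ 2`, so minimizing it amounts to minimizing the weighted mean
of `‖x i - c‖ ^ 2`. This mean is at least `R ^ 2`, and a feasible vector supported on `I` (which
exists since `y` lies in the convex hull of `x '' I`) attains `R ^ 2`. A minimizer therefore attains
`R ^ 2` as well, which forces it to vanish wherever `‖x i - c‖ > R`.
-/

open Finset

theorem exists_weights_supported_of_mem_convexHull_image {ι E : Type*} [Fintype ι]
    [AddCommGroup E] [Module ℝ E] {x : ι → E} {I : Set ι} {y : E}
    (hy : y ∈ convexHull ℝ (x '' I)) :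
    ∃ w : ι → ℝ, (∀ i, 0 ≤ w i) ∧ ∑ i, w i = 1 ∧ (∀ i ∉ I, w i = 0) ∧ ∑ i, w i • x i = y := by
  classical
  let W : Set (ι → ℝ) := stdSimplex ℝ ι ∩ {w | ∀ i ∉ I, w i = 0}
  have hW : Convex ℝ W := (convex_stdSimplex ℝ ι).inter fun v hv u hu a b _ _ _ i hi => by
    simp [hv i hi, hu i hi]
  suffices h : convexHull ℝ (x '' I) ⊆ Fintype.linearCombination ℝ x '' W by
    obtain ⟨w, ⟨⟨hw₀, hw₁⟩, hwI⟩, rfl⟩ := h hy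
    exact ⟨w, hw₀, hw₁, hwI, Fintype.linearCombination_apply ℝ x w⟩
  refine convexHull_min ?_ (hW.linear_image _)
  rintro _ ⟨i, hi, rfl⟩
  refine ⟨Pi.single i 1, ⟨single_mem_stdSimplex ℝ i, fun j hj => ?_⟩, ?_⟩
  · exact Pi.single_eq_of_ne (ne_of_mem_of_not_mem hi hj).symm 1
  · simp [Fintype.linearCombination_apply_single]

/-- The parallel axis theorem. -/
theorem sum_mul_norm_sub_sq_eq_add_of_sum_smul_eq {ι E : Type*} [Fintype ι]
    [NormedAddCommGroup E] [InnerProductSpace ℝ E] {x : ι → E} {w : ι → ℝ} {y : E}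
    (hw₁ : ∑ i, w i = 1) (hy : ∑ i, w i • x i = y) (c : E) :
    ∑ i, w i * ‖x i - c‖ ^ 2 = ∑ i, w i * ‖x i - y‖ ^ 2 + ‖y - c‖ ^ 2 := by
  have hcentered : ∑ i, w i • (x i - y) = 0 := by
    simp only [smul_sub, sum_sub_distrib, hy, ← sum_smul, hw₁, one_smul, sub_self]
  have hcross : ∑ i, w i * inner ℝ (x i - y) (y - c) = 0 := by
    simp only [← real_inner_smul_left, ← sum_inner, hcentered, inner_zero_left]
  have hexpand : ∀ i, ‖x i - c‖ ^ 2 =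
      ‖x i - y‖ ^ 2 + 2 * inner ℝ (x i - y) (y - c) + ‖y - c‖ ^ 2 := fun i => by
    rw [← norm_add_sq_real, sub_add_sub_cancel]
  simp only [hexpand, mul_add, sum_add_distrib, mul_left_comm _ (2 : ℝ), ← mul_sum, hcross,
    ← sum_mul, hw₁]
  ring

theorem eq_zero_of_sum_mul_le_of_le {ι : Type*} [Fintype ι] {w f : ι → ℝ} {m : ℝ}
    (hw₀ : ∀ i, 0 ≤ w i) (hw₁ : ∑ i, w i = 1) (hf : ∀ i, m ≤ f i)
    (hsum : ∑ i, w i * f i ≤ m) {i : ι} (hi : m < f i) : w i = 0 := by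
  have hterm : ∀ j ∈ univ, 0 ≤ w j * (f j - m) := fun j _ =>
    mul_nonneg (hw₀ j) (sub_nonneg.mpr (hf j))
  have hzero : ∑ j, w j * (f j - m) = 0 := by
    refine le_antisymm ?_ (sum_nonneg hterm)
    simp only [mul_sub, sum_sub_distrib, ← sum_mul, hw₁]
    linarith
  have hwi := (sum_eq_zero_iff_of_nonneg hterm).mp hzero i (mem_univ i)
  exact (mul_eq_zero.mp hwi).resolve_right (sub_ne_zero.mpr hi.ne')

theorem stmt10_general {d n : ℕ} (x : Fin n → EuclideanSpace ℝ (Fin d))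
    (c : EuclideanSpace ℝ (Fin d)) (R : ℝ) (hR : 0 < R)
    (I : Finset (Fin n))
    (hI : ∀ j ∈ I, ‖x j - c‖ = R) (hI' : ∀ j ∉ I, R < ‖x j - c‖)
    (y : EuclideanSpace ℝ (Fin d))
    (hy : y ∈ convexHull ℝ (x '' (I : Set (Fin n))))
    (wstar : Fin n → ℝ) (hws : ∀ i, 0 ≤ wstar i) (hws1 : ∑ i, wstar i = 1)
    (hwsy : ∑ i, wstar i • x i = y)
    (hmin : ∀ w : Fin n → ℝ, (∀ i, 0 ≤ w i) → ∑ i, w i = 1 →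
      ∑ i, w i • x i = y →
      ∑ i, wstar i * ‖x i - y‖ ^ 2 ≤ ∑ i, w i * ‖x i - y‖ ^ 2) :
    ∀ i ∉ I, wstar i = 0 := by
  obtain ⟨w₀, hw₀, hw₀1, hw₀I, hw₀y⟩ := exists_weights_supported_of_mem_convexHull_image hy
  have hw₀R : ∑ i, w₀ i * ‖x i - c‖ ^ 2 = R ^ 2 := by
    rw [← one_mul (R ^ 2), ← hw₀1, sum_mul]
    refine sum_congr rfl fun i _ => ?_
    by_cases hi : i ∈ I
    · rw [hI i hi]
    · rw [hw₀I i (by exact_mod_cast hi), zero_mul, zero_mul]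
  have hle : ∑ i, wstar i * ‖x i - c‖ ^ 2 ≤ R ^ 2 := by
    linarith [hmin w₀ hw₀ hw₀1 hw₀y, sum_mul_norm_sub_sq_eq_add_of_sum_smul_eq hws1 hwsy c,
      sum_mul_norm_sub_sq_eq_add_of_sum_smul_eq hw₀1 hw₀y c]
  have hRle : ∀ i, R ≤ ‖x i - c‖ := fun i => by
    by_cases hi : i ∈ I
    exacts [(hI i hi).ge, (hI' i hi).le]
  intro i hi
  exact eq_zero_of_sum_mul_le_of_le hws hws1 (fun j => pow_le_pow_left₀ hR.le (hRle j) 2) hle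
    (pow_lt_pow_left₀ (hI' i hi) hR.le two_ne_zero)

theorem stmt10 {d n : ℕ} (x : Fin n → EuclideanSpace ℝ (Fin d))
    (c : EuclideanSpace ℝ (Fin d)) (R : ℝ) (hR : 0 < R)
    (I : Finset (Fin n)) (hcard : I.card ≤ d + 1)
    (hI : ∀ j ∈ I, ‖x j - c‖ = R) (hI' : ∀ j ∉ I, R < ‖x j - c‖)
    (y : EuclideanSpace ℝ (Fin d))
    (hy : y ∈ convexHull ℝ (x '' (I : Set (Fin n))))
    (wstar : Fin n → ℝ) (hws : ∀ i, 0 ≤ wstar i) (hws1 : ∑ i, wstar i = 1)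
    (hwsy : ∑ i, wstar i • x i = y)
    (hmin : ∀ w : Fin n → ℝ, (∀ i, 0 ≤ w i) → ∑ i, w i = 1 →
      ∑ i, w i • x i = y →
      ∑ i, wstar i * ‖x i - y‖ ^ 2 ≤ ∑ i, w i * ‖x i - y‖ ^ 2) :
    ∀ i ∉ I, wstar i = 0 :=
  stmt10_general x c R hR I hI hI' y hy wstar hws hws1 hwsy hmin
end

section
/- Let x_1,...,x_n ∈ ℝ^d and y in the convex hull of {x_i}. For each ρ > 0 let w_ρ be a minimizer over Δ^n of (1/2)‖Σ_i w_i x_i − y‖² + ρ Σ_i w_i‖x_i − y‖². Then ‖Σ_i (w_ρ)_i x_i − y‖ → 0 as ρ → 0⁺, with rate ‖Σ_i (w_ρ)_i x_i − y‖ ≤ √(ρ C) for C = max_i‖x_i − y‖² − min_i‖x_i − y‖². -/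
/-!
Let `u ∈ Δⁿ` represent `y = Σ uᵢ xᵢ` and compare the minimizer `w` with the points
`w + t (u - w)`, `t ∈ (0, 1]`. Along this segment the residual `Σ vᵢ xᵢ - y` is scaled by `1 - t`
while the penalty `Σ vᵢ ‖xᵢ - y‖²` is affine in `t`, so minimality of `w` gives
`(1 - t/2) ‖Σ wᵢ xᵢ - y‖² ≤ ρ (Σ uᵢ ‖xᵢ - y‖² - Σ wᵢ ‖xᵢ - y‖²)`. Letting `t → 0` and bounding the
two weighted averages by the max and the min yields `‖Σ wᵢ xᵢ - y‖² ≤ ρ C`.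
-/

open Set Filter Topology

theorem convexHull_range_eq_image_stdSimplex {ι E : Type*} [Fintype ι] [AddCommGroup E]
    [Module ℝ E] (x : ι → E) :
    convexHull ℝ (range x) = Fintype.linearCombination ℝ x '' stdSimplex ℝ ι := by
  classical
  rw [← convexHull_rangle_single_eq_stdSimplex, LinearMap.image_convexHull, ← range_comp]
  congr
  ext i
  simp [Fintype.linearCombination_apply, Pi.single_apply]

theorem sq_norm_map_sub_le_of_isMinOn {V E : Type*} [AddCommGroup V] [Module ℝ V]
    [NormedAddCommGroup E] [NormedSpace ℝ E] {K : Set V} (hK : Convex ℝ K) (φ : V →ₗ[ℝ] E)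
    (ℓ : V →ₗ[ℝ] ℝ) {ρ : ℝ} {u w : V} {y : E} (hu : u ∈ K) (hyu : φ u = y) (hw : w ∈ K)
    (hmin : IsMinOn (fun v => 1 / 2 * ‖φ v - y‖ ^ 2 + ρ * ℓ v) K w) :
    ‖φ w - y‖ ^ 2 ≤ ρ * (ℓ u - ℓ w) := by
  subst hyu
  set A := ‖φ w - φ u‖ ^ 2
  have along_segment : ∀ t ∈ Ioc (0 : ℝ) 1, (1 - t / 2) * A ≤ ρ * (ℓ u - ℓ w) := by
    rintro t ⟨ht₀, ht₁⟩
    have h := isMinOn_iff.mp hmin _ (hK.add_smul_sub_mem hw hu ⟨ht₀.le, ht₁⟩)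
    have hφ : φ (w + t • (u - w)) - φ u = (1 - t) • (φ w - φ u) := by
      simp only [map_add, map_smul, map_sub]; module
    have hℓ : ℓ (w + t • (u - w)) = ℓ w + t * (ℓ u - ℓ w) := by
      simp only [map_add, map_smul, map_sub, smul_eq_mul]
    simp only [hφ, hℓ, norm_smul, mul_pow, Real.norm_eq_abs, sq_abs] at h
    refine le_of_mul_le_mul_left ?_ ht₀
    nlinarith
  have hlim : Tendsto (fun t : ℝ => (1 - t / 2) * A) (𝓝[>] 0) (𝓝 A) := by
    refine (Continuous.tendsto' ?_ 0 A (by simp)).mono_left nhdsWithin_le_nhds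
    fun_prop
  exact le_of_tendsto hlim (eventually_of_mem (Ioc_mem_nhdsGT one_pos) along_segment)

theorem sum_mul_le_sup'_of_mem_stdSimplex_s12 {ι : Type*} [Fintype ι] {u : ι → ℝ}
    (hu : u ∈ stdSimplex ℝ ι) (c : ι → ℝ) (hne : (Finset.univ : Finset ι).Nonempty) :
    ∑ i, u i * c i ≤ Finset.univ.sup' hne c := by
  have h := Finset.centerMass_le_sup (s := .univ) (f := c) (fun i _ => hu.1 i) (by simp [hu.2])
  rwa [Finset.centerMass_eq_of_sum_1 _ _ hu.2] at h

theorem inf'_le_sum_mul_of_mem_stdSimplex_s12 {ι : Type*} [Fintype ι] {u : ι → ℝ}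
    (hu : u ∈ stdSimplex ℝ ι) (c : ι → ℝ) (hne : (Finset.univ : Finset ι).Nonempty) :
    Finset.univ.inf' hne c ≤ ∑ i, u i * c i := by
  have h := Finset.inf_le_centerMass (s := .univ) (f := c) (fun i _ => hu.1 i) (by simp [hu.2])
  rwa [Finset.centerMass_eq_of_sum_1 _ _ hu.2] at h

theorem stmt12 {d n : ℕ} (x : Fin n → EuclideanSpace ℝ (Fin d))
    (y : EuclideanSpace ℝ (Fin d))
    (hne : (Finset.univ : Finset (Fin n)).Nonempty)
    (hy : y ∈ convexHull ℝ (Set.range x))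
    (w : ℝ → Fin n → ℝ)
    (hw : ∀ ρ : ℝ, 0 < ρ → (∀ i, 0 ≤ w ρ i) ∧ ∑ i, w ρ i = 1)
    (hmin : ∀ ρ : ℝ, 0 < ρ → ∀ v : Fin n → ℝ, (∀ i, 0 ≤ v i) → ∑ i, v i = 1 →
      (1 / 2) * ‖(∑ i, w ρ i • x i) - y‖ ^ 2 + ρ * ∑ i, w ρ i * ‖x i - y‖ ^ 2 ≤
      (1 / 2) * ‖(∑ i, v i • x i) - y‖ ^ 2 + ρ * ∑ i, v i * ‖x i - y‖ ^ 2) :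
    (∀ ρ : ℝ, 0 < ρ →
      ‖(∑ i, w ρ i • x i) - y‖ ≤
        Real.sqrt (ρ * (Finset.univ.sup' hne (fun i => ‖x i - y‖ ^ 2)
          - Finset.univ.inf' hne (fun i => ‖x i - y‖ ^ 2)))) ∧
    Filter.Tendsto (fun ρ : ℝ => ‖(∑ i, w ρ i • x i) - y‖)
      (nhdsWithin 0 (Set.Ioi 0)) (nhds 0) := by
  rw [convexHull_range_eq_image_stdSimplex] at hy
  obtain ⟨u, hu, hyu⟩ := hy
  set c : Fin n → ℝ := fun i => ‖x i - y‖ ^ 2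
  set C := Finset.univ.sup' hne c - Finset.univ.inf' hne c
  have hsq : ∀ ρ > 0, ‖(∑ i, w ρ i • x i) - y‖ ^ 2 ≤ ρ * C := by
    intro ρ hρ
    have hwρ : w ρ ∈ stdSimplex ℝ (Fin n) := hw ρ hρ
    have hmin' : IsMinOn (fun v => 1 / 2 * ‖Fintype.linearCombination ℝ x v - y‖ ^ 2 +
        ρ * Fintype.linearCombination ℝ c v) (stdSimplex ℝ (Fin n)) (w ρ) :=
      isMinOn_iff.mpr fun v hv => by
        simpa only [Fintype.linearCombination_apply, smul_eq_mul] using hmin ρ hρ v hv.1 hv.2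
    have h := sq_norm_map_sub_le_of_isMinOn (convex_stdSimplex ℝ _) _ _ hu hyu hwρ hmin'
    simp only [Fintype.linearCombination_apply, smul_eq_mul] at h
    refine h.trans (mul_le_mul_of_nonneg_left ?_ hρ.le)
    linarith [sum_mul_le_sup'_of_mem_stdSimplex_s12 hu c hne,
      inf'_le_sum_mul_of_mem_stdSimplex_s12 hwρ c hne]
  have hbound : ∀ ρ > 0, ‖(∑ i, w ρ i • x i) - y‖ ≤ Real.sqrt (ρ * C) :=
    fun ρ hρ => Real.le_sqrt_of_sq_le (hsq ρ hρ)
  refine ⟨hbound, ?_⟩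
  have hsqrt : Tendsto (fun ρ : ℝ => Real.sqrt (ρ * C)) (𝓝[>] 0) (𝓝 0) := by
    refine (Continuous.tendsto' ?_ 0 0 (by simp)).mono_left nhdsWithin_le_nhds
    fun_prop
  exact tendsto_of_tendsto_of_tendsto_of_le_of_le' tendsto_const_nhds hsqrt
    (.of_forall fun _ => norm_nonneg _) (eventually_mem_nhdsWithin.mono hbound)
end

section
/- Let x_1,...,x_n ∈ ℝ^d with n ≥ 1 and y ∈ ℝ^d. Suppose index j satisfies ‖x_j − y‖ < ‖x_i − y‖ for all i ≠ j. Then there exists P > 0 such that for all ρ ≥ P, the standard basis vector e_j (the weight vector selecting the nearest neighbor x_j) is the unique minimizer over Δ^n of F_ρ(w) = (1/2)‖Σ_i w_i x_i − y‖² + ρ Σ_i w_i‖x_i − y‖². -/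
/-!
At the vertex `e_j` of the simplex, the derivative of the convex objective `F_ρ` in the
direction `e_i - e_j` is `⟪x_j - y, x_i - x_j⟫ + ρ (‖x_i - y‖² - ‖x_j - y‖²)`; since `x_j` is the
strict nearest neighbour of `y`, it is positive for every `i ≠ j` once `ρ` is large. By convexity,
`F_ρ w - F_ρ e_j` is at least the `w`-weighted sum of these slopes, and any `w ≠ e_j` in the
simplex puts positive weight on some `i ≠ j`.
-/

open scoped RealInnerProductSpace

open Filter

section LocalityObjective

variable {ι E : Type*} [NormedAddCommGroup E] [InnerProductSpace ℝ E]

noncomputable def vertexSlope (x : ι → E) (y : E) (ρ : ℝ) (j i : ι) : ℝ :=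
  ⟪x j - y, x i - x j⟫ + ρ * (‖x i - y‖ ^ 2 - ‖x j - y‖ ^ 2)

theorem vertexSlope_self (x : ι → E) (y : E) (ρ : ℝ) (j : ι) : vertexSlope x y ρ j j = 0 := by
  simp [vertexSlope]

theorem eventually_vertexSlope_pos (x : ι → E) (y : E) {i j : ι}
    (hij : ‖x j - y‖ < ‖x i - y‖) : ∀ᶠ ρ in atTop, 0 < vertexSlope x y ρ j i := by
  have hgap : 0 < ‖x i - y‖ ^ 2 - ‖x j - y‖ ^ 2 :=
    sub_pos.2 (pow_lt_pow_left₀ hij (norm_nonneg _) two_ne_zero)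
  filter_upwards [eventually_gt_atTop (-⟪x j - y, x i - x j⟫ / (‖x i - y‖ ^ 2 - ‖x j - y‖ ^ 2))]
    with ρ hρ
  rw [div_lt_iff₀ hgap] at hρ
  simp only [vertexSlope]
  linarith

variable [Fintype ι]

noncomputable def localityObjective (x : ι → E) (y : E) (ρ : ℝ) (w : ι → ℝ) : ℝ :=
  (1 / 2) * ‖(∑ i, w i • x i) - y‖ ^ 2 + ρ * ∑ i, w i * ‖x i - y‖ ^ 2

theorem localityObjective_single [DecidableEq ι] (x : ι → E) (y : E) (ρ : ℝ) (j : ι) :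
    localityObjective x y ρ (Pi.single j 1) = (1 / 2) * ‖x j - y‖ ^ 2 + ρ * ‖x j - y‖ ^ 2 := by
  simp [localityObjective, Pi.single_apply]

theorem localityObjective_single_add_sum_vertexSlope_le [DecidableEq ι] (x : ι → E) (y : E)
    (ρ : ℝ) (j : ι) {w : ι → ℝ} (hw : ∑ i, w i = 1) :
    localityObjective x y ρ (Pi.single j 1) + ∑ i, w i * vertexSlope x y ρ j i ≤
      localityObjective x y ρ w := by
  set u := x j - y
  set v := (∑ i, w i • x i) - y
  have hvu : v - u = ∑ i, w i • (x i - x j) := by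
    simp only [v, u, smul_sub, Finset.sum_sub_distrib, ← Finset.sum_smul, hw, one_smul]
    abel
  have hinner : ⟪u, v - u⟫ = ∑ i, w i * ⟪u, x i - x j⟫ := by
    simp only [hvu, inner_sum, real_inner_smul_right]
  have hconvex : ‖u‖ ^ 2 + 2 * ⟪u, v - u⟫ ≤ ‖v‖ ^ 2 := by
    have hexpand := norm_sub_sq_real v u
    rw [inner_sub_right, real_inner_comm, real_inner_self_eq_norm_sq]
    linarith [sq_nonneg ‖v - u‖]
  have hlocality : ∑ i, w i * (‖x i - y‖ ^ 2 - ‖u‖ ^ 2) = ∑ i, w i * ‖x i - y‖ ^ 2 - ‖u‖ ^ 2 := by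
    simp only [mul_sub, Finset.sum_sub_distrib, ← Finset.sum_mul, hw, one_mul]
  have hsplit : ∑ i, w i * vertexSlope x y ρ j i =
      ⟪u, v - u⟫ + ρ * (∑ i, w i * ‖x i - y‖ ^ 2 - ‖u‖ ^ 2) := by
    simp only [vertexSlope, mul_add, Finset.sum_add_distrib, hinner, ← hlocality,
      Finset.mul_sum]
    congr 1
    exact Finset.sum_congr rfl fun i _ => by ring
  rw [localityObjective_single, hsplit]
  simp only [localityObjective]
  linarith

end LocalityObjective

theorem exists_ne_pos_of_ne_single {ι : Type*} [Fintype ι] [DecidableEq ι] {w : ι → ℝ} {j : ι}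
    (hw0 : ∀ i, 0 ≤ w i) (hw1 : ∑ i, w i = 1) (hne : w ≠ Pi.single j 1) :
    ∃ i, i ≠ j ∧ 0 < w i := by
  by_contra! h
  have hzero : ∀ i, i ≠ j → w i = 0 := fun i hi => le_antisymm (h i hi) (hw0 i)
  have hj : w j = 1 := by
    rwa [Fintype.sum_eq_single j hzero] at hw1
  exact hne (funext fun i => by
    by_cases hi : i = j
    · subst hi; simp [hj]
    · simp [hi, hzero i hi])

theorem stmt19 {d n : ℕ} (x : Fin n → EuclideanSpace ℝ (Fin d))
    (y : EuclideanSpace ℝ (Fin d)) (j : Fin n)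
    (hj : ∀ i, i ≠ j → ‖x j - y‖ < ‖x i - y‖) :
    ∃ P : ℝ, 0 < P ∧ ∀ ρ : ℝ, P ≤ ρ →
      ∀ w : Fin n → ℝ, (∀ i, 0 ≤ w i) → ∑ i, w i = 1 → w ≠ Pi.single j 1 →
        (1 / 2) * ‖(∑ i, (Pi.single j 1 : Fin n → ℝ) i • x i) - y‖ ^ 2 +
            ρ * ∑ i, (Pi.single j 1 : Fin n → ℝ) i * ‖x i - y‖ ^ 2 <
        (1 / 2) * ‖(∑ i, w i • x i) - y‖ ^ 2 + ρ * ∑ i, w i * ‖x i - y‖ ^ 2 := by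
  have hslope : ∀ᶠ ρ in atTop, ∀ i, i ≠ j → 0 < vertexSlope x y ρ j i :=
    eventually_all.2 fun i => eventually_imp_distrib_left.2 fun hi =>
      eventually_vertexSlope_pos x y (hj i hi)
  obtain ⟨P, hP⟩ := eventually_atTop.1 hslope
  refine ⟨max P 1, by positivity, fun ρ hρ w hw0 hw1 hne => ?_⟩
  have hρP : P ≤ ρ := le_of_max_le_left hρ
  have hpos : 0 < ∑ i, w i * vertexSlope x y ρ j i := by
    obtain ⟨i, hij, hwi⟩ := exists_ne_pos_of_ne_single hw0 hw1 hne
    have hslope_nonneg : ∀ k, 0 ≤ vertexSlope x y ρ j k := fun k => by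
      rcases eq_or_ne k j with rfl | hk
      · exact (vertexSlope_self x y ρ k).ge
      · exact (hP ρ hρP k hk).le
    exact Finset.sum_pos' (fun k _ => mul_nonneg (hw0 k) (hslope_nonneg k))
      ⟨i, Finset.mem_univ i, mul_pos hwi (hP ρ hρP i hij)⟩
  show localityObjective x y ρ (Pi.single j 1) < localityObjective x y ρ w
  linarith [localityObjective_single_add_sum_vertexSlope_le x y ρ j hw1]
end
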